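/- For every n ≥ 1, the number of matchings of [2n] avoiding the unlabeled pattern [1122] equals 1; the unique such matching is the totally crossing matching 12...n12...n. -/

import Mathlib

/-- A (perfect) matching on `Fin m`: a fixed-point-free involution. -/
def IsMatching {m : ℕ} (f : Fin m → Fin m) : Prop :=
  Function.Involutive f ∧ ∀ i, f i ≠ i

/-- The pattern `σ` occurs in `τ`. -/
def Occurs {m M : ℕ} (σ : Fin m → Fin m) (τ : Fin M → Fin M) : Prop :=
  ∃ g : Fin m → Fin M, StrictMono g ∧ ∀ p, τ (g p) = g (σ p)

def Avoids {m M : ℕ} (σ : Fin m → Fin m) (τ : Fin M → Fin M) : Prop :=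
  ¬ Occurs σ τ

def juxt {m M : ℕ} (σ : Fin m → Fin m) (τ : Fin M → Fin M) :
    Fin (m + M) → Fin (m + M) :=
  fun i => finSumFinEquiv (Sum.map σ τ (finSumFinEquiv.symm i))

def liftMatching {m : ℕ} (σ : Fin m → Fin m) : Fin (m + 2) → Fin (m + 2) := fun i =>
  if _ : i.val = 0 then ⟨m + 1, by omega⟩
  else if _ : i.val = m + 1 then ⟨0, by omega⟩
  else ⟨(σ ⟨i.val - 1, by have := i.isLt; omega⟩).val + 1, by
    have := (σ ⟨i.val - 1, by have := i.isLt; omega⟩).isLt; omega⟩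

/-- `τ` contains `σ`, but deleting the rightmost edge of `τ` (the edge containing the
last vertex) destroys every occurrence of `σ`. -/
def MinContains {m M : ℕ} (σ : Fin m → Fin m) (τ : Fin M → Fin M) : Prop :=
  Occurs σ τ ∧ ¬ ∃ g : Fin m → Fin M, StrictMono g ∧ (∀ p, τ (g p) = g (σ p)) ∧
    ∀ p, (g p : ℕ) ≠ M - 1 ∧ (τ (g p) : ℕ) ≠ M - 1

def ConnectedMatching {m : ℕ} (f : Fin m → Fin m) : Prop :=
  0 < m ∧ ¬ ∃ h : ℕ, 0 < h ∧ h < m ∧ ∀ i : Fin m, ((i : ℕ) < h ↔ ((f i : ℕ) < h))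

def HasCrossing {m : ℕ} (f : Fin m → Fin m) : Prop :=
  ∃ a b : Fin m, a < b ∧ b < f a ∧ f a < f b

def p1122 : Fin 4 → Fin 4 := ![1, 0, 3, 2]
def p1212 : Fin 4 → Fin 4 := ![2, 3, 0, 1]
def p1221 : Fin 4 → Fin 4 := ![3, 2, 1, 0]

def totCross (n : ℕ) : Fin (2 * n) → Fin (2 * n) := fun i =>
  if h : i.val < n then ⟨i.val + n, by omega⟩
  else ⟨i.val - n, by have := i.isLt; omega⟩

/-!
Avoiding `1122` forces every left endpoint of an arc to precede every right endpoint; as there are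
as many left as right endpoints, the left endpoints are exactly `0, …, n - 1`. Avoiding `1221`
makes the map from left endpoints to right endpoints strictly increasing, hence it is `i ↦ i + n`.
-/

open Finset

section Matching

variable {M : ℕ} {f : Fin M → Fin M}

theorem strictMono_vecFour {a b c d : Fin M} (hab : a < b) (hbc : b < c) (hcd : c < d) :
    StrictMono ![a, b, c, d] := by
  rw [Fin.strictMono_iff_lt_succ]
  intro i
  fin_cases i <;> simpa

theorem occurs_p1122_iff (hf : Function.Involutive f) :
    Occurs p1122 f ↔ ∃ a b c d, a < b ∧ b < c ∧ c < d ∧ f a = b ∧ f c = d := by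
  constructor
  · rintro ⟨g, hg, hfg⟩
    exact ⟨g 0, g 1, g 2, g 3, hg (by decide), hg (by decide), hg (by decide), hfg 0, hfg 2⟩
  · rintro ⟨a, _, c, _, hab, hbc, hcd, rfl, rfl⟩
    refine ⟨![a, f a, c, f c], strictMono_vecFour hab hbc hcd, fun p => ?_⟩
    fin_cases p <;> simp [p1122, hf _]

theorem occurs_p1221_iff (hf : Function.Involutive f) :
    Occurs p1221 f ↔ ∃ a b c d, a < b ∧ b < c ∧ c < d ∧ f a = d ∧ f b = c := by
  constructor
  · rintro ⟨g, hg, hfg⟩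
    exact ⟨g 0, g 1, g 2, g 3, hg (by decide), hg (by decide), hg (by decide), hfg 0, hfg 1⟩
  · rintro ⟨a, b, _, _, hab, hbc, hcd, rfl, rfl⟩
    refine ⟨![a, b, f b, f a], strictMono_vecFour hab hbc hcd, fun p => ?_⟩
    fin_cases p <;> simp [p1221, hf _]

def openers (f : Fin M → Fin M) : Finset (Fin M) := {i | i < f i}

@[simp]
theorem mem_openers {i : Fin M} : i ∈ openers f ↔ i < f i := by
  simp [openers]

theorem IsMatching.apply_lt_of_not_lt_apply (hf : IsMatching f) {i : Fin M} (hi : ¬ i < f i) :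
    f i < i :=
  lt_of_le_of_ne (not_lt.1 hi) (hf.2 i)

theorem IsMatching.two_mul_card_openers (hf : IsMatching f) : 2 * #(openers f) = M := by
  have hswap : #{i | ¬ i < f i} = #(openers f) := by
    refine card_nbij' f f (fun i hi => ?_) (fun i hi => ?_) (fun i _ => hf.1 i) (fun i _ => hf.1 i)
    · simp only [mem_coe, mem_filter, mem_univ, true_and, mem_openers, not_lt] at hi ⊢
      rw [hf.1 i]
      exact hf.apply_lt_of_not_lt_apply (not_lt.2 hi)
    · simp only [mem_coe, mem_filter, mem_univ, true_and, mem_openers, not_lt] at hi ⊢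
      rw [hf.1 i]
      exact hi.le
  have := card_filter_add_card_filter_not (s := univ) (fun i => i < f i)
  rw [← openers, hswap, card_univ, Fintype.card_fin] at this
  omega

theorem lt_of_lt_apply_of_apply_lt (hf : Function.Involutive f) (h : Avoids p1122 f)
    {x y : Fin M} (hx : x < f x) (hy : f y < y) : x < y := by
  by_contra! hyx
  obtain rfl | hyx := hyx.eq_or_lt
  · exact lt_asymm hx hy
  · exact h ((occurs_p1122_iff hf).2 ⟨f y, y, x, f x, hy, hyx, hx, hf y, rfl⟩)

theorem apply_lt_apply_of_lt (hf : Function.Involutive f) (h : Avoids p1221 f)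
    {a c : Fin M} (hac : a < c) (hc : c < f c) : f a < f c := by
  by_contra! hca
  obtain hca | hca := hca.lt_or_eq
  · exact h ((occurs_p1221_iff hf).2 ⟨a, c, f c, f a, hac, hc, hca, rfl, rfl⟩)
  · exact hac.ne (hf.injective hca).symm

end Matching

section TotallyCrossing

variable {n : ℕ}

theorem totCross_val (i : Fin (2 * n)) :
    (totCross n i : ℕ) = if (i : ℕ) < n then i + n else i - n := by
  unfold totCross
  split_ifs <;> rfl

theorem isMatching_totCross : IsMatching (totCross n) := by
  refine ⟨fun i => Fin.ext ?_, fun i hi => ?_⟩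
  · have := i.isLt
    simp only [totCross_val]
    split_ifs <;> omega
  · have := congrArg Fin.val hi
    rw [totCross_val] at this
    split_ifs at this <;> omega

theorem avoids_p1122_totCross : Avoids p1122 (totCross n) := by
  rw [Avoids, occurs_p1122_iff isMatching_totCross.1]
  rintro ⟨a, b, c, d, hab, hbc, hcd, hb, hd⟩
  rw [Fin.ext_iff, totCross_val] at hb hd
  rw [Fin.lt_def] at hab hbc hcd
  split_ifs at hb hd <;> omega

theorem avoids_p1221_totCross : Avoids p1221 (totCross n) := by
  rw [Avoids, occurs_p1221_iff isMatching_totCross.1]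
  rintro ⟨a, b, c, d, hab, hbc, hcd, hd, hc⟩
  rw [Fin.ext_iff, totCross_val] at hd hc
  rw [Fin.lt_def] at hab hbc hcd
  split_ifs at hd hc <;> omega

variable {f : Fin (2 * n) → Fin (2 * n)}

theorem lt_apply_iff_val_lt (hf : IsMatching f) (h : Avoids p1122 f) (i : Fin (2 * n)) :
    i < f i ↔ (i : ℕ) < n := by
  have hcard : #(openers f) = n := by have := hf.two_mul_card_openers; omega
  constructor
  · intro hi
    have hsub : Iic i ⊆ openers f := fun j hj => by
      simp only [mem_Iic, mem_openers] at hj ⊢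
      by_contra hj'
      exact (lt_of_lt_apply_of_apply_lt hf.1 h hi (hf.apply_lt_of_not_lt_apply hj')).not_ge hj
    have := card_le_card hsub
    rw [Fin.card_Iic, hcard] at this
    omega
  · intro hi
    by_contra hi'
    have hsub : openers f ⊆ Iio i := fun j hj => by
      simp only [mem_Iio, mem_openers] at hj ⊢
      exact lt_of_lt_apply_of_apply_lt hf.1 h hj (hf.apply_lt_of_not_lt_apply hi')
    have := card_le_card hsub
    rw [Fin.card_Iio, hcard] at this
    omega

theorem eq_totCross (hf : IsMatching f) (h1 : Avoids p1122 f) (h2 : Avoids p1221 f) :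
    f = totCross n := by
  have hopen := lt_apply_iff_val_lt hf h1
  have hclose (i : Fin (2 * n)) (hi : (i : ℕ) < n) : n ≤ f i := by
    by_contra hfi
    have := (hopen (f i)).2 (by omega)
    rw [hf.1 i] at this
    exact lt_asymm this ((hopen i).2 hi)
  -- shifting right endpoints down by `n` makes `f` a strictly monotone self-map of `Fin n`
  let φ : Fin n → Fin n := fun k => ⟨f ⟨k, by omega⟩ - n, by have := (f ⟨k, by omega⟩).isLt; omega⟩
  have hφ : StrictMono φ := fun k l hkl => by
    have := apply_lt_apply_of_lt hf.1 h2 (a := ⟨k, by omega⟩) (c := ⟨l, by omega⟩) hkl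
      ((hopen _).2 l.isLt)
    have := hclose ⟨k, by omega⟩ k.isLt
    simp only [φ, Fin.lt_def] at this ⊢
    omega
  have hleft (i : Fin (2 * n)) (hi : (i : ℕ) < n) : (f i : ℕ) = i + n := by
    have := congrArg Fin.val (hφ.apply_eq (x := ⟨i, hi⟩))
    have := hclose i hi
    simp only [φ, Fin.eta] at *
    omega
  funext i
  apply Fin.ext
  rw [totCross_val]
  split_ifs with hi
  · exact hleft i hi
  · have hfi := hf.apply_lt_of_not_lt_apply (mt (hopen i).1 hi)
    have := hleft (f i) ((hopen (f i)).1 (by rwa [hf.1 i]))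
    rw [hf.1 i] at this
    omega

end TotallyCrossing

theorem avoid_unlabeled_1122_general (n : ℕ) :
    Nat.card {f : Fin (2 * n) → Fin (2 * n) //
        IsMatching f ∧ Avoids p1122 f ∧ Avoids p1221 f} = 1 ∧
    ∀ f : Fin (2 * n) → Fin (2 * n),
      (IsMatching f ∧ Avoids p1122 f ∧ Avoids p1221 f) ↔ f = totCross n := by
  have key (f : Fin (2 * n) → Fin (2 * n)) :
      (IsMatching f ∧ Avoids p1122 f ∧ Avoids p1221 f) ↔ f = totCross n :=
    ⟨fun ⟨hf, h1, h2⟩ => eq_totCross hf h1 h2,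
      fun hf => hf ▸ ⟨isMatching_totCross, avoids_p1122_totCross, avoids_p1221_totCross⟩⟩
  refine ⟨?_, key⟩
  rw [Nat.card_congr (Equiv.subtypeEquivRight key)]
  exact Nat.card_unique

theorem avoid_unlabeled_1122 (n : ℕ) (hn : 1 ≤ n) :
    Nat.card {f : Fin (2 * n) → Fin (2 * n) //
        IsMatching f ∧ Avoids p1122 f ∧ Avoids p1221 f} = 1 ∧
    ∀ f : Fin (2 * n) → Fin (2 * n),
      (IsMatching f ∧ Avoids p1122 f ∧ Avoids p1221 f) ↔ f = totCross n :=
  avoid_unlabeled_1122_general n
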